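/- Let d ≥ 4 be a real number, let Z ~ N(0,1), and let U be the d-quantization of Z. Then E[U²] ≤ (1.6/d)·exp(−d²/8). -/

import Mathlib

/-!
On the `ℓ`-th quantization cell, `|Z| ≥ d (|ℓ| - 1/2)`, so `U²` is dominated by
`1{|Z| ≥ d/2} + 16 Z² / (9 d²) · 1{|Z| ≥ 3d/2}`. The Mills-ratio bounds
`∫_t^∞ φ ≤ φ(t)/t` and `∫_t^∞ x² φ ≤ (t + 2/t) φ(t)` (compare with `x φ` and `x³ φ`, which have
explicit antiderivatives) control both Gaussian tails: the first contributes
`4/√(2π) · e^{-d²/8}/d ≈ 1.596 · e^{-d²/8}/d`, the second carries an extra factor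
`e^{-d²} ≤ e^{-16}`, and together they stay below `1.6 · e^{-d²/8}/d`.
-/

open MeasureTheory ProbabilityTheory Set Filter Real Topology

lemma integrable_pow_mul_exp_neg_sq_div_two (n : ℕ) :
    Integrable fun x : ℝ => x ^ n * exp (-x ^ 2 / 2) := by
  have h := integrable_rpow_mul_exp_neg_mul_sq (b := 1 / 2) (by norm_num)
    (show (-1 : ℝ) < n by linarith [n.cast_nonneg (α := ℝ)])
  refine h.congr (ae_of_all _ fun x => ?_)
  simp only [rpow_natCast]
  congr 2
  ring

lemma tendsto_pow_mul_exp_neg_sq_div_two_atTop (n : ℕ) :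
    Tendsto (fun x : ℝ => x ^ n * exp (-x ^ 2 / 2)) atTop (𝓝 0) := by
  have h := (rpow_mul_exp_neg_mul_sq_isLittleO_exp_neg (b := 1 / 2) (by norm_num) n
    ).tendsto_zero_of_tendsto
      (tendsto_exp_atBot.comp (tendsto_id.const_mul_atTop_of_neg (by norm_num)))
  refine h.congr fun x => ?_
  simp only [rpow_natCast]
  congr 2
  ring

lemma integral_Ioi_mul_exp_neg_sq_div_two (t : ℝ) :
    ∫ x in Ioi t, x * exp (-x ^ 2 / 2) = exp (-t ^ 2 / 2) := by
  have hderiv : ∀ x ∈ Ici t,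
      HasDerivAt (fun y => -exp (-y ^ 2 / 2)) (x * exp (-x ^ 2 / 2)) x := fun x _ =>
    ((hasDerivAt_pow 2 x).fun_neg.div_const 2).exp.fun_neg.congr_deriv (by ring)
  have hlim := (tendsto_pow_mul_exp_neg_sq_div_two_atTop 0).neg
  simp only [pow_zero, one_mul, neg_zero] at hlim
  rw [integral_Ioi_of_hasDerivAt_of_tendsto' hderiv
    (by simpa using (integrable_pow_mul_exp_neg_sq_div_two 1).integrableOn) hlim]
  ring

lemma integral_Ioi_pow_three_mul_exp_neg_sq_div_two (t : ℝ) :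
    ∫ x in Ioi t, x ^ 3 * exp (-x ^ 2 / 2) = (t ^ 2 + 2) * exp (-t ^ 2 / 2) := by
  have hderiv : ∀ x ∈ Ici t, HasDerivAt (fun y => -((y ^ 2 + 2) * exp (-y ^ 2 / 2)))
      (x ^ 3 * exp (-x ^ 2 / 2)) x := fun x _ =>
    (((hasDerivAt_pow 2 x).add_const 2).mul
      ((hasDerivAt_pow 2 x).fun_neg.div_const 2).exp).fun_neg.congr_deriv (by ring)
  have hlim := ((tendsto_pow_mul_exp_neg_sq_div_two_atTop 2).add
    ((tendsto_pow_mul_exp_neg_sq_div_two_atTop 0).const_mul 2)).neg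
  simp only [pow_zero, one_mul, mul_zero, add_zero, neg_zero, ← add_mul] at hlim
  rw [integral_Ioi_of_hasDerivAt_of_tendsto' hderiv
    (integrable_pow_mul_exp_neg_sq_div_two 3).integrableOn hlim]
  ring

lemma setIntegral_Ioi_le_inv_mul_setIntegral_Ioi_mul {f : ℝ → ℝ} {t : ℝ} (ht : 0 < t)
    (hf : ∀ x ∈ Ioi t, 0 ≤ f x) (hfi : IntegrableOn f (Ioi t))
    (hxf : IntegrableOn (fun x => x * f x) (Ioi t)) :
    ∫ x in Ioi t, f x ≤ t⁻¹ * ∫ x in Ioi t, x * f x := by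
  rw [← integral_const_mul]
  refine setIntegral_mono_on hfi (hxf.const_mul _) measurableSet_Ioi fun x hx => ?_
  have : 1 ≤ t⁻¹ * x := by rw [inv_mul_eq_div, one_le_div ht]; exact (mem_Ioi.mp hx).le
  nlinarith [hf x hx]

lemma integral_Ioi_exp_neg_sq_div_two_le {t : ℝ} (ht : 0 < t) :
    ∫ x in Ioi t, exp (-x ^ 2 / 2) ≤ exp (-t ^ 2 / 2) / t := by
  have h := setIntegral_Ioi_le_inv_mul_setIntegral_Ioi_mul ht (fun x _ => (exp_pos _).le)
    (by simpa using (integrable_pow_mul_exp_neg_sq_div_two 0).integrableOn)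
    (by simpa using (integrable_pow_mul_exp_neg_sq_div_two 1).integrableOn)
  rwa [integral_Ioi_mul_exp_neg_sq_div_two, inv_mul_eq_div] at h

lemma integral_Ioi_sq_mul_exp_neg_sq_div_two_le {t : ℝ} (ht : 0 < t) :
    ∫ x in Ioi t, x ^ 2 * exp (-x ^ 2 / 2) ≤ (t ^ 2 + 2) / t * exp (-t ^ 2 / 2) := by
  have h := setIntegral_Ioi_le_inv_mul_setIntegral_Ioi_mul ht (fun x _ => by positivity)
    (integrable_pow_mul_exp_neg_sq_div_two 2).integrableOn
    ((integrable_pow_mul_exp_neg_sq_div_two 3).integrableOn.congr_fun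
      (fun x _ => by ring) measurableSet_Ioi)
  simp_rw [← mul_assoc, ← pow_succ'] at h
  rw [integral_Ioi_pow_three_mul_exp_neg_sq_div_two, inv_mul_eq_div] at h
  rwa [div_mul_eq_mul_div]

lemma setIntegral_abs_ge_eq_two_mul_setIntegral_Ioi {f : ℝ → ℝ} (hf : ∀ x, f (-x) = f x)
    (hfi : Integrable f) {t : ℝ} (ht : 0 < t) :
    ∫ x in {x | t ≤ |x|}, f x = 2 * ∫ x in Ioi t, f x := by
  have hset : {x : ℝ | t ≤ |x|} = Iic (-t) ∪ Ici t := by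
    ext x; simp only [mem_ofPred_eq, mem_union, mem_Iic, mem_Ici, le_abs', or_comm]
  have hneg : ∫ x in Iic (-t), f x = ∫ x in Ioi t, f x := by
    rw [← integral_comp_neg_Ioi]; simp_rw [hf]
  rw [hset, setIntegral_union (Iic_disjoint_Ici.mpr (by linarith)) measurableSet_Ici
    hfi.integrableOn hfi.integrableOn, hneg, integral_Ici_eq_integral_Ioi, two_mul]

lemma gaussianPDFReal_zero_one (x : ℝ) :
    gaussianPDFReal 0 1 x = (√(2 * π))⁻¹ * exp (-x ^ 2 / 2) := by
  simp [gaussianPDFReal]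

lemma setIntegral_gaussianReal_zero_one {s : Set ℝ} (hs : MeasurableSet s) (f : ℝ → ℝ) :
    ∫ x in s, f x ∂gaussianReal 0 1 = (√(2 * π))⁻¹ * ∫ x in s, f x * exp (-x ^ 2 / 2) := by
  rw [← integral_indicator hs, integral_gaussianReal_eq_integral_smul one_ne_zero,
    ← integral_indicator hs, ← integral_const_mul]
  congr 1 with x
  by_cases hx : x ∈ s <;> simp [hx, gaussianPDFReal_zero_one]; ring

lemma setIntegral_abs_ge_gaussianReal {f : ℝ → ℝ} (hf : ∀ x, f (-x) = f x)
    (hfi : Integrable fun x => f x * exp (-x ^ 2 / 2)) {t : ℝ} (ht : 0 < t) :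
    ∫ x in {x | t ≤ |x|}, f x ∂gaussianReal 0 1
      = 2 / √(2 * π) * ∫ x in Ioi t, f x * exp (-x ^ 2 / 2) := by
  rw [setIntegral_gaussianReal_zero_one (measurableSet_le measurable_const measurable_abs),
    setIntegral_abs_ge_eq_two_mul_setIntegral_Ioi (fun x => by rw [hf, neg_sq]) hfi ht]
  ring

lemma gaussianReal_real_abs_ge_le {t : ℝ} (ht : 0 < t) :
    (gaussianReal 0 1).real {x | t ≤ |x|} ≤ 2 / √(2 * π) * (exp (-t ^ 2 / 2) / t) := by
  have h := setIntegral_abs_ge_gaussianReal (f := fun _ => 1) (fun _ => rfl)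
    (by simpa using (integrable_pow_mul_exp_neg_sq_div_two 0)) ht
  rw [setIntegral_const, smul_eq_mul, mul_one] at h
  rw [h]
  gcongr
  simpa using integral_Ioi_exp_neg_sq_div_two_le ht

lemma setIntegral_sq_gaussianReal_abs_ge_le {t : ℝ} (ht : 0 < t) :
    ∫ x in {x | t ≤ |x|}, x ^ 2 ∂gaussianReal 0 1
      ≤ 2 / √(2 * π) * ((t ^ 2 + 2) / t * exp (-t ^ 2 / 2)) := by
  rw [setIntegral_abs_ge_gaussianReal (fun x => neg_sq x)
    (integrable_pow_mul_exp_neg_sq_div_two 2) ht]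
  gcongr
  exact integral_Ioi_sq_mul_exp_neg_sq_div_two_le ht

/-- The factor `16 / (9 d²)` comes from `|x| ≥ d (|ℓ| - 1/2) ≥ 3 d |ℓ| / 4` on the `ℓ`-th
quantization cell when `|ℓ| ≥ 2`. -/
noncomputable def quantizationMajorant (d x : ℝ) : ℝ :=
  {x : ℝ | d / 2 ≤ |x|}.indicator 1 x
    + {x : ℝ | 3 * d / 2 ≤ |x|}.indicator (fun x => 16 / (9 * d ^ 2) * x ^ 2) x

lemma quantizationMajorant_nonneg (d x : ℝ) : 0 ≤ quantizationMajorant d x :=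
  add_nonneg (indicator_nonneg (fun _ _ => zero_le_one) _)
    (indicator_nonneg (fun _ _ => by positivity) _)

lemma measurable_quantizationMajorant (d : ℝ) : Measurable (quantizationMajorant d) :=
  (measurable_const.indicator (measurableSet_le measurable_const measurable_abs)).add
    ((by fun_prop : Measurable fun x : ℝ => 16 / (9 * d ^ 2) * x ^ 2).indicator
      (measurableSet_le measurable_const measurable_abs))

lemma sq_le_quantizationMajorant {d x : ℝ} (hd : 0 < d) {ℓ : ℤ}
    (hx : x ∈ Ioc (d * ℓ - d / 2) (d * ℓ + d / 2)) :
    (ℓ : ℝ) ^ 2 ≤ quantizationMajorant d x := by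
  have hcell : d * (|(ℓ : ℝ)| - 1 / 2) ≤ |x| := by
    have hdist : |x - d * ℓ| ≤ d / 2 := abs_le.mpr ⟨by linarith [hx.1], by linarith [hx.2]⟩
    have := abs_sub_abs_le_abs_sub (d * ℓ) x
    rw [abs_mul, abs_of_pos hd, abs_sub_comm] at this
    linarith
  have h₁ : 0 ≤ {x : ℝ | d / 2 ≤ |x|}.indicator (1 : ℝ → ℝ) x :=
    indicator_nonneg (fun _ _ => zero_le_one) x
  have h₂ : 0 ≤ {x : ℝ | 3 * d / 2 ≤ |x|}.indicator (fun x => 16 / (9 * d ^ 2) * x ^ 2) x :=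
    indicator_nonneg (fun _ _ => by positivity) x
  rw [quantizationMajorant, ← sq_abs]
  obtain hℓ | hℓ | hℓ : |ℓ| = 0 ∨ |ℓ| = 1 ∨ 2 ≤ |ℓ| := by have := abs_nonneg ℓ; omega
  · have hℓ' : |(ℓ : ℝ)| = 0 := by exact_mod_cast hℓ
    rw [hℓ']
    linarith
  · have hℓ' : |(ℓ : ℝ)| = 1 := by exact_mod_cast hℓ
    rw [hℓ'] at hcell ⊢
    rw [indicator_of_mem (show x ∈ {x : ℝ | d / 2 ≤ |x|} by simp only [mem_ofPred_eq]; linarith),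
      Pi.one_apply]
    linarith
  · have hℓ' : (2 : ℝ) ≤ |(ℓ : ℝ)| := by exact_mod_cast hℓ
    have h34 : 3 * d * |(ℓ : ℝ)| ≤ 4 * |x| := by nlinarith
    have hsq : |(ℓ : ℝ)| ^ 2 ≤ 16 / (9 * d ^ 2) * x ^ 2 := by
      rw [div_mul_eq_mul_div, le_div_iff₀ (by positivity), ← sq_abs x]
      nlinarith [mul_self_le_mul_self (by positivity : 0 ≤ 3 * d * |(ℓ : ℝ)|) h34]
    rw [indicator_of_mem
      (show x ∈ {x : ℝ | 3 * d / 2 ≤ |x|} by simp only [mem_ofPred_eq]; nlinarith)]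
    linarith

lemma integrable_indicator_one_abs_ge (t : ℝ) :
    Integrable ({x : ℝ | t ≤ |x|}.indicator (1 : ℝ → ℝ)) (gaussianReal 0 1) :=
  (integrable_const 1).indicator (measurableSet_le measurable_const measurable_abs)

lemma integrable_indicator_const_mul_sq_abs_ge (t c : ℝ) :
    Integrable ({x : ℝ | t ≤ |x|}.indicator fun x => c * x ^ 2) (gaussianReal 0 1) :=
  ((memLp_id_gaussianReal 2).integrable_sq.const_mul c).indicator
    (measurableSet_le measurable_const measurable_abs)

lemma integrable_quantizationMajorant (d : ℝ) :
    Integrable (quantizationMajorant d) (gaussianReal 0 1) :=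
  (integrable_indicator_one_abs_ge _).add (integrable_indicator_const_mul_sq_abs_ge _ _)

lemma gaussian_tail_bounds_sum_le {d : ℝ} (hd : 4 ≤ d) :
    2 / √(2 * π) * (exp (-(d / 2) ^ 2 / 2) / (d / 2))
      + 16 / (9 * d ^ 2) * (2 / √(2 * π) *
        (((3 * d / 2) ^ 2 + 2) / (3 * d / 2) * exp (-(3 * d / 2) ^ 2 / 2)))
      ≤ 1.6 / d * exp (-d ^ 2 / 8) := by
  have hs : 2.506 ≤ √(2 * π) := (le_sqrt' (by norm_num)).mpr (by nlinarith [pi_gt_d4])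
  have hq : exp (-d ^ 2) ≤ 1 / 625 := by
    have h5 : 5 ≤ exp 4 := by linarith [add_one_le_exp 4]
    calc exp (-d ^ 2) ≤ exp (-16) := exp_le_exp.mpr (by nlinarith)
      _ = (exp 4 ^ 4)⁻¹ := by rw [← exp_nat_mul, ← exp_neg]; norm_num
      _ ≤ (5 ^ 4)⁻¹ := by gcongr
      _ = 1 / 625 := by norm_num
  have hcoef : 8 / 3 + 64 / (27 * d ^ 2) ≤ 3 := by
    rw [← le_sub_iff_add_le', div_le_iff₀ (by positivity)]; nlinarith
  have hE₁ : exp (-(d / 2) ^ 2 / 2) = exp (-d ^ 2 / 8) := by ring_nf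
  have hE₂ : exp (-(3 * d / 2) ^ 2 / 2) = exp (-d ^ 2 / 8) * exp (-d ^ 2) := by
    rw [← exp_add]; ring_nf
  rw [hE₁, hE₂]
  calc _ = 2 * exp (-d ^ 2 / 8) / (√(2 * π) * d)
        * (2 + (8 / 3 + 64 / (27 * d ^ 2)) * exp (-d ^ 2)) := by
        field_simp; ring
    _ ≤ 2 * exp (-d ^ 2 / 8) / (√(2 * π) * d) * (2 + 3 * (1 / 625)) := by gcongr
    _ ≤ 1.6 / d * exp (-d ^ 2 / 8) := by
        rw [div_mul_eq_mul_div, div_le_iff₀ (by positivity)]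
        field_simp
        nlinarith [exp_pos (-d ^ 2 / 8)]

lemma integral_quantizationMajorant_le {d : ℝ} (hd : 4 ≤ d) :
    ∫ x, quantizationMajorant d x ∂gaussianReal 0 1 ≤ 1.6 / d * exp (-d ^ 2 / 8) := by
  have hs (t : ℝ) : MeasurableSet {x : ℝ | t ≤ |x|} :=
    measurableSet_le measurable_const measurable_abs
  unfold quantizationMajorant
  rw [integral_add (integrable_indicator_one_abs_ge _)
      (integrable_indicator_const_mul_sq_abs_ge _ _),
    integral_indicator_one (hs _), integral_indicator (hs _), integral_const_mul]
  calc _ ≤ 2 / √(2 * π) * (exp (-(d / 2) ^ 2 / 2) / (d / 2))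
        + 16 / (9 * d ^ 2) * (2 / √(2 * π) *
          (((3 * d / 2) ^ 2 + 2) / (3 * d / 2) * exp (-(3 * d / 2) ^ 2 / 2))) := by
        gcongr
        · exact gaussianReal_real_abs_ge_le (by linarith)
        · exact setIntegral_sq_gaussianReal_abs_ge_le (by linarith)
    _ ≤ 1.6 / d * exp (-d ^ 2 / 8) := gaussian_tail_bounds_sum_le hd

lemma exists_int_mem_Ioc_mul_sub_half_mul_add_half {d : ℝ} (hd : 0 < d) (x : ℝ) :
    ∃ ℓ : ℤ, x ∈ Ioc (d * ℓ - d / 2) (d * ℓ + d / 2) := by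
  obtain ⟨h₁, h₂⟩ := sub_toIocDiv_zsmul_mem_Ioc hd (-(d / 2)) x
  rw [zsmul_eq_mul] at h₁ h₂
  exact ⟨toIocDiv hd (-(d / 2)) x, by linarith, by linarith⟩

theorem quantization_second_moment
    {Ω : Type*} [MeasurableSpace Ω] (P : Measure Ω)
    (d : ℝ) (hd : 4 ≤ d)
    (Z : Ω → ℝ) (hZ : Measurable Z) (hZlaw : P.map Z = gaussianReal 0 1)
    (U : Ω → ℤ)
    (hquant : ∀ ω, ∀ ℓ : ℤ,
      Z ω ∈ Set.Ioc (d * ℓ - d / 2) (d * ℓ + d / 2) → U ω = ℓ) :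
    ∫⁻ ω, ENNReal.ofReal ((U ω : ℝ) ^ 2) ∂P
      ≤ ENNReal.ofReal (1.6 / d * Real.exp (-d ^ 2 / 8)) := by
  have hd₀ : 0 < d := by linarith
  have hU (ω : Ω) : (U ω : ℝ) ^ 2 ≤ quantizationMajorant d (Z ω) := by
    obtain ⟨ℓ, hℓ⟩ := exists_int_mem_Ioc_mul_sub_half_mul_add_half hd₀ (Z ω)
    rw [hquant ω ℓ hℓ]
    exact sq_le_quantizationMajorant hd₀ hℓ
  calc ∫⁻ ω, ENNReal.ofReal ((U ω : ℝ) ^ 2) ∂P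
      ≤ ∫⁻ ω, ENNReal.ofReal (quantizationMajorant d (Z ω)) ∂P :=
        lintegral_mono fun ω => ENNReal.ofReal_le_ofReal (hU ω)
    _ = ∫⁻ x, ENNReal.ofReal (quantizationMajorant d x) ∂gaussianReal 0 1 := by
        rw [← hZlaw, lintegral_map (measurable_quantizationMajorant d).ennreal_ofReal hZ]
    _ = ENNReal.ofReal (∫ x, quantizationMajorant d x ∂gaussianReal 0 1) :=
        (ofReal_integral_eq_lintegral_ofReal (integrable_quantizationMajorant d)
          (ae_of_all _ (quantizationMajorant_nonneg d))).symm
    _ ≤ ENNReal.ofReal (1.6 / d * Real.exp (-d ^ 2 / 8)) :=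
        ENNReal.ofReal_le_ofReal (integral_quantizationMajorant_le hd)
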